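/- arXiv:0910.1555 — 4 statements merged into one kernel-verified Lean document; each statement's English description precedes it below -/
import Mathlib

section
/- Subdivision lemma for r-variation: let γ : [a,b] → X be a continuous curve in a metric space with finite r-variation (1 ≤ r < ∞), and assume the function t ↦ ‖γ|_{[a,t]}‖_{V^r} is continuous. Then there exists t* ∈ [a,b] such that, writing γ₁ = γ|_{[a,t*]} and γ₂ = γ|_{[t*,b]}, one has ‖γ₁‖_{V^r} ≤ 2^{-1/r} ‖γ‖_{V^r} and ‖γ₂‖_{V^r} ≤ 2^{-1/r} ‖γ‖_{V^r}. -/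
/-! Concatenating a partition of `[a, t]` with one of `[t, b]` gives a partition of `[a, b]`, so the
`r`-th power of the variation is superadditive: `V(a,t)^r + V(t,b)^r ≤ V(a,b)^r`. Choose `t` by the
intermediate value theorem with `V(a,t) = 2^{-1/r} V(a,b)`; then
`V(t,b)^r ≤ V(a,b)^r - V(a,b)^r / 2 = V(a,t)^r`. -/

open MeasureTheory
open scoped ENNReal

/-- The `r`-variation of a path `γ` over the interval `[a,b]`. -/
noncomputable def pathVar {X : Type*} [MetricSpace X] (r a b : ℝ) (γ : ℝ → X) : ℝ≥0∞ :=
  ⨆ (n : ℕ) (t : ℕ → ℝ) (_ : t 0 = a ∧ t n = b ∧ ∀ i < n, t i < t (i + 1)),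
    (∑ j ∈ Finset.range n, ENNReal.ofReal (dist (γ (t (j + 1))) (γ (t j)) ^ r)) ^ (1 / r)

structure IntervalPartition (a b : ℝ) where
  n : ℕ
  t : ℕ → ℝ
  t_zero : t 0 = a
  t_n : t n = b
  t_lt_succ : ∀ i < n, t i < t (i + 1)

namespace IntervalPartition

variable {a b c : ℝ}

lemma lt_of_n_pos (P : IntervalPartition a b) (hn : 0 < P.n) : a < b := by
  have h := strictMonoOn_Iic_of_lt_succ P.t_lt_succ (Set.mem_Iic.2 P.n.zero_le) Set.self_mem_Iic hn
  rwa [P.t_zero, P.t_n] at h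

lemma nonempty_of_le (hab : a ≤ b) : Nonempty (IntervalPartition a b) := by
  rcases hab.eq_or_lt with rfl | hlt
  · exact ⟨⟨0, fun _ => a, rfl, rfl, by simp⟩⟩
  · exact ⟨⟨1, fun i => if i = 0 then a else b, rfl, rfl, by simpa using hlt⟩⟩

def appendFun (P : IntervalPartition a c) (Q : IntervalPartition c b) (i : ℕ) : ℝ :=
  if i ≤ P.n then P.t i else Q.t (i - P.n)

lemma appendFun_of_le (P : IntervalPartition a c) (Q : IntervalPartition c b) {i : ℕ}
    (hi : i ≤ P.n) : appendFun P Q i = P.t i :=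
  if_pos hi

lemma appendFun_of_ge (P : IntervalPartition a c) (Q : IntervalPartition c b) {i : ℕ}
    (hi : P.n ≤ i) : appendFun P Q i = Q.t (i - P.n) := by
  rcases hi.eq_or_lt with rfl | hlt
  · rw [appendFun_of_le P Q le_rfl, Nat.sub_self, P.t_n, Q.t_zero]
  · exact if_neg hlt.not_ge

def append (P : IntervalPartition a c) (Q : IntervalPartition c b) : IntervalPartition a b where
  n := P.n + Q.n
  t := appendFun P Q
  t_zero := by rw [appendFun_of_le P Q P.n.zero_le, P.t_zero]
  t_n := by rw [appendFun_of_ge P Q (Nat.le_add_right _ _), Nat.add_sub_cancel_left, Q.t_n]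
  t_lt_succ i hi := by
    rcases lt_or_ge i P.n with h | h
    · rw [appendFun_of_le P Q h.le, appendFun_of_le P Q h]
      exact P.t_lt_succ i h
    · rw [appendFun_of_ge P Q h, appendFun_of_ge P Q (by omega : P.n ≤ i + 1), Nat.sub_add_comm h]
      exact Q.t_lt_succ _ (by omega)

variable {X : Type*} [MetricSpace X]

noncomputable def sumPow (r : ℝ) (γ : ℝ → X) (P : IntervalPartition a b) : ℝ≥0∞ :=
  ∑ j ∈ Finset.range P.n, ENNReal.ofReal (dist (γ (P.t (j + 1))) (γ (P.t j)) ^ r)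

lemma sumPow_append (r : ℝ) (γ : ℝ → X) (P : IntervalPartition a c) (Q : IntervalPartition c b) :
    (P.append Q).sumPow r γ = P.sumPow r γ + Q.sumPow r γ := by
  refine (Finset.sum_range_add _ P.n Q.n).trans (congrArg₂ _ ?_ ?_)
  · refine Finset.sum_congr rfl fun j hj => ?_
    rw [Finset.mem_range] at hj
    simp only [append, appendFun_of_le P Q hj, appendFun_of_le P Q hj.le]
  · refine Finset.sum_congr rfl fun j _ => ?_
    simp only [append, appendFun_of_ge P Q (Nat.le_add_right _ _), Nat.add_sub_cancel_left,
      Nat.add_assoc]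

end IntervalPartition

section PathVar

variable {X : Type*} [MetricSpace X] {r a b c : ℝ}

lemma pathVar_eq_iSup_sumPow (r a b : ℝ) (γ : ℝ → X) :
    pathVar r a b γ = ⨆ P : IntervalPartition a b, P.sumPow r γ ^ (1 / r) := by
  refine le_antisymm (iSup_le fun n => iSup_le fun t => iSup_le fun ⟨h0, hn, hlt⟩ => ?_)
    (iSup_le fun P => ?_)
  · exact le_iSup_of_le (⟨n, t, h0, hn, hlt⟩ : IntervalPartition a b) le_rfl
  · exact le_iSup_of_le P.n <| le_iSup_of_le P.t <|
      le_iSup_of_le ⟨P.t_zero, P.t_n, P.t_lt_succ⟩ le_rfl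

lemma pathVar_rpow_eq_iSup_sumPow (hr : 0 < r) (a b : ℝ) (γ : ℝ → X) :
    pathVar r a b γ ^ r = ⨆ P : IntervalPartition a b, P.sumPow r γ := by
  rw [pathVar_eq_iSup_sumPow, ← ENNReal.orderIsoRpow_apply r hr, map_iSup]
  simp [← ENNReal.rpow_mul, hr.ne']

lemma pathVar_self (hr : 0 < r) (a : ℝ) (γ : ℝ → X) : pathVar r a a γ = 0 := by
  refine (pathVar_eq_iSup_sumPow r a a γ).trans (ENNReal.iSup_eq_zero.2 fun P => ?_)
  have hn : P.n = 0 := Nat.eq_zero_of_not_pos fun hn => (P.lt_of_n_pos hn).false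
  simp [IntervalPartition.sumPow, hn, hr]

lemma pathVar_rpow_add_rpow_le (hr : 0 < r) (γ : ℝ → X) (hac : a ≤ c) (hcb : c ≤ b) :
    pathVar r a c γ ^ r + pathVar r c b γ ^ r ≤ pathVar r a b γ ^ r := by
  have := IntervalPartition.nonempty_of_le hac
  have := IntervalPartition.nonempty_of_le hcb
  simp only [pathVar_rpow_eq_iSup_sumPow hr]
  refine ENNReal.iSup_add_iSup_le fun P Q => ?_
  rw [← IntervalPartition.sumPow_append]
  exact le_iSup (fun R : IntervalPartition a b => R.sumPow r γ) (P.append Q)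

end PathVar

lemma ENNReal.le_of_rpow_add_rpow_le_two_mul {r : ℝ} (hr : 0 < r) {x y : ℝ≥0∞} (hy : y ≠ ⊤)
    (h : y ^ r + x ^ r ≤ 2 * y ^ r) : x ≤ y := by
  rw [two_mul] at h
  exact (ENNReal.rpow_le_rpow_iff hr).1
    (ENNReal.le_of_add_le_add_left (ENNReal.rpow_ne_top_of_nonneg hr.le hy) h)

lemma ENNReal.two_mul_rpow_two_rpow_neg_inv {r : ℝ} (hr : 0 < r) (x : ℝ≥0∞) :
    2 * (ENNReal.ofReal ((2 : ℝ) ^ (-(1 / r))) * x) ^ r = x ^ r := by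
  rw [ENNReal.mul_rpow_of_nonneg _ _ hr.le, ENNReal.ofReal_rpow_of_nonneg (by positivity) hr.le,
    ← Real.rpow_mul zero_le_two, neg_mul, one_div_mul_cancel hr.ne', Real.rpow_neg_one,
    ← mul_assoc, ENNReal.ofReal_inv_of_pos two_pos, ENNReal.ofReal_ofNat,
    ENNReal.mul_inv_cancel two_ne_zero ENNReal.ofNat_ne_top, one_mul]

theorem pathVar_subdivide_general {X : Type*} [MetricSpace X] (γ : ℝ → X) (a b r : ℝ)
    (hab : a ≤ b) (hr : 1 ≤ r)
    (hvarcont : ContinuousOn (fun t => (pathVar r a t γ).toReal) (Set.Icc a b)) :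
    ∃ t₀ ∈ Set.Icc a b,
      pathVar r a t₀ γ ≤ ENNReal.ofReal ((2 : ℝ) ^ (-(1 / r))) * pathVar r a b γ ∧
      pathVar r t₀ b γ ≤ ENNReal.ofReal ((2 : ℝ) ^ (-(1 / r))) * pathVar r a b γ := by
  have hr0 : 0 < r := by linarith
  set c : ℝ := 2 ^ (-(1 / r))
  have hc : 0 < c := Real.rpow_pos_of_pos two_pos _
  have hc1 : c ≤ 1 :=
    Real.rpow_le_one_of_one_le_of_nonpos one_le_two (neg_nonpos.2 (by positivity))
  rcases eq_or_ne (pathVar r a b γ) ⊤ with htop | hfin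
  · refine ⟨a, Set.left_mem_Icc.2 hab, ?_⟩
    simp only [htop, ENNReal.mul_top (ENNReal.ofReal_pos.2 hc).ne', le_top, and_self]
  have hstart : (pathVar r a a γ).toReal ≤ c * (pathVar r a b γ).toReal := by
    rw [pathVar_self hr0, ENNReal.toReal_zero]
    positivity
  obtain ⟨t₀, ht₀, hmid⟩ := intermediate_value_Icc hab hvarcont
    ⟨hstart, mul_le_of_le_one_left ENNReal.toReal_nonneg hc1⟩
  have hsplit := pathVar_rpow_add_rpow_le hr0 γ ht₀.1 ht₀.2
  have hleft_fin : pathVar r a t₀ γ ≠ ⊤ :=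
    ne_top_of_le_ne_top hfin ((ENNReal.rpow_le_rpow_iff hr0).1 (le_self_add.trans hsplit))
  have hleft : pathVar r a t₀ γ = ENNReal.ofReal c * pathVar r a b γ := by
    rw [← ENNReal.ofReal_toReal hleft_fin, ← ENNReal.ofReal_toReal hfin,
      ← ENNReal.ofReal_mul hc.le]
    exact congrArg ENNReal.ofReal hmid
  refine ⟨t₀, ht₀, hleft.le, ENNReal.le_of_rpow_add_rpow_le_two_mul hr0 (hleft ▸ hleft_fin) ?_⟩
  rwa [ENNReal.two_mul_rpow_two_rpow_neg_inv hr0, ← hleft]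

/-- Subdivision lemma: a continuous curve of finite r-variation (with continuously varying
partial variation) can be split at a point `t*` into two subcurves each of r-variation at most
`2^{-1/r}` times the total r-variation. -/
theorem pathVar_subdivide {X : Type*} [MetricSpace X] (γ : ℝ → X) (a b r : ℝ)
    (hab : a ≤ b) (hr : 1 ≤ r)
    (hcont : ContinuousOn γ (Set.Icc a b))
    (hfin : pathVar r a b γ ≠ ⊤)
    (hvarcont : ContinuousOn (fun t => (pathVar r a t γ).toReal) (Set.Icc a b)) :
    ∃ t₀ ∈ Set.Icc a b,
      pathVar r a t₀ γ ≤ ENNReal.ofReal ((2 : ℝ) ^ (-(1 / r))) * pathVar r a b γ ∧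
      pathVar r t₀ b γ ≤ ENNReal.ofReal ((2 : ℝ) ^ (-(1 / r))) * pathVar r a b γ :=
  pathVar_subdivide_general γ a b r hab hr hvarcont
end

section
/- Variational Christ–Kiselev lemma (splitting step): let T_≤ f(x,N) = ∫_{y<N} K(x,y) f(y) dy be the partial integrals of an integral operator, let f ∈ L^p(ℝ) with ‖f‖_p = 1, and let N₀ satisfy ∫_{-∞}^{N₀} |f|^p = ∫_{N₀}^{∞} |f|^p = 1/2. Write f₋ = f·1_{(-∞,N₀]} and f₊ = f·1_{[N₀,∞)}. Then for every x, ‖T_≤ f(x,·)‖_{V^r_N} ≤ (‖T_≤ f₋(x,·)‖_{V^r_N}^r + ‖T_≤ f₊(x,·)‖_{V^r_N}^r)^{1/r} + 4 T_* f(x), where T_* f(x) = sup_N |T_≤ f(x,N)|. -/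
open MeasureTheory
open scoped ENNReal

/-- Partial integrals `T_≤ f(x,N) = ∫_{y<N} K(x,y) f(y) dy`. -/
noncomputable def Tle (K : ℝ → ℝ → ℂ) (f : ℝ → ℂ) (x N : ℝ) : ℂ :=
  ∫ y in Set.Iio N, K x y * f y

/-- The `r`-variation (in the parameter) of a function `F : ℝ → ℂ`. -/
noncomputable def varR (r : ℝ) (F : ℝ → ℂ) : ℝ≥0∞ :=
  ⨆ (n : ℕ) (t : ℕ → ℝ) (_ : ∀ i < n, t i < t (i + 1)),
    (∑ j ∈ Finset.range n, ENNReal.ofReal (‖F (t (j + 1)) - F (t j)‖ ^ r)) ^ (1 / r)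


/-!
Cut a partition `N_0 < ⋯ < N_K` at `N₀`. The increments left of `N₀` are increments of
`T_≤ f₋(x,·)`, since it agrees with `T_≤ f(x,·)` on `(-∞, N₀]`; the increments right of `N₀` are
increments of `T_≤ f₊(x,·)`, since there the two differ by the constant `T f₋(x)`. At most one
increment straddles `N₀`, and it is bounded by `2 T_* f(x)`. Summing `r`-th powers and using
`(A + c^r)^{1/r} ≤ A^{1/r} + c` for `r ≥ 1` gives the bound.
-/

open Finset

noncomputable def varSum (r : ℝ) (F : ℝ → ℂ) (t : ℕ → ℝ) (n : ℕ) : ℝ≥0∞ :=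
  ∑ j ∈ range n, ENNReal.ofReal (‖F (t (j + 1)) - F (t j)‖ ^ r)

section Variation

variable {r : ℝ} {F G H : ℝ → ℂ} {t : ℕ → ℝ} {n : ℕ}

lemma varSum_rpow_le_varR (ht : ∀ i < n, t i < t (i + 1)) :
    varSum r F t n ^ (1 / r) ≤ varR r F :=
  le_iSup_of_le n <| le_iSup_of_le t <| le_iSup_of_le ht le_rfl

lemma varSum_le_varR_rpow (hr : 0 < r) (ht : ∀ i < n, t i < t (i + 1)) :
    varSum r F t n ≤ varR r F ^ r :=
  calc varSum r F t n = (varSum r F t n ^ (1 / r)) ^ r := by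
        rw [← ENNReal.rpow_mul, one_div_mul_cancel hr.ne', ENNReal.rpow_one]
    _ ≤ varR r F ^ r := ENNReal.rpow_le_rpow (varSum_rpow_le_varR ht) hr.le

lemma varR_le_of_forall {C : ℝ≥0∞}
    (h : ∀ n t, (∀ i < n, t i < t (i + 1)) → varSum r F t n ^ (1 / r) ≤ C) :
    varR r F ≤ C :=
  iSup_le fun n => iSup_le fun t => iSup_le fun ht => h n t ht

lemma varSum_add (m k : ℕ) :
    varSum r F t (m + 1 + k) = varSum r F t m + ENNReal.ofReal (‖F (t (m + 1)) - F (t m)‖ ^ r)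
      + varSum r F (fun j => t (m + 1 + j)) k := by
  rw [varSum, sum_range_add, sum_range_succ]
  rfl

lemma varSum_mono_length {m : ℕ} (hmn : m ≤ n) : varSum r F t m ≤ varSum r F t n :=
  sum_le_sum_of_subset (range_subset_range.mpr hmn)

lemma varSum_congr (h : ∀ j < n, F (t (j + 1)) - F (t j) = G (t (j + 1)) - G (t j)) :
    varSum r F t n = varSum r G t n :=
  sum_congr rfl fun j hj => by rw [h j (mem_range.mp hj)]

lemma ofReal_norm_sub_le_two_mul_iSup (F : ℝ → ℂ) (a b : ℝ) :
    ENNReal.ofReal ‖F b - F a‖ ≤ 2 * ⨆ N, ENNReal.ofReal ‖F N‖ :=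
  calc ENNReal.ofReal ‖F b - F a‖ ≤ ENNReal.ofReal (‖F b‖ + ‖F a‖) :=
        ENNReal.ofReal_le_ofReal (norm_sub_le _ _)
    _ ≤ ENNReal.ofReal ‖F b‖ + ENNReal.ofReal ‖F a‖ := ENNReal.ofReal_add_le
    _ ≤ 2 * ⨆ N, ENNReal.ofReal ‖F N‖ := by
        rw [two_mul]
        exact add_le_add (le_iSup (fun N => ENNReal.ofReal ‖F N‖) b)
          (le_iSup (fun N => ENNReal.ofReal ‖F N‖) a)

lemma exists_split_index (ht : ∀ i < n, t i < t (i + 1)) (N₀ : ℝ) :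
    ∃ m ≤ n, (∀ j < m, t (j + 1) ≤ N₀) ∧ ∀ j, m < j → j ≤ n → N₀ < t j := by
  classical
  have hex : ∃ k, k = n ∨ N₀ < t (k + 1) := ⟨n, .inl rfl⟩
  refine ⟨Nat.find hex, Nat.find_le (.inl rfl), fun j hj => ?_, fun j hmj hjn => ?_⟩
  · exact not_lt.mp fun h => Nat.find_min hex hj (.inr h)
  · rcases Nat.find_spec hex with hm | hm
    · omega
    exact hm.trans_le <| (strictMonoOn_Iic_of_lt_succ ht).monotoneOn
      (Set.mem_Iic.mpr (by omega)) (Set.mem_Iic.mpr hjn) hmj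

variable {N₀ : ℝ}

lemma varSum_le_of_split (hr : 0 < r) (hG : ∀ N ≤ N₀, F N = G N)
    (hH : ∀ a b, N₀ ≤ a → a ≤ b → F b - F a = H b - H a) (ht : ∀ i < n, t i < t (i + 1)) :
    ∃ m, varSum r F t n ≤ varR r G ^ r + varR r H ^ r
      + ENNReal.ofReal (‖F (t (m + 1)) - F (t m)‖ ^ r) := by
  obtain ⟨m, hmn, hleft, hright⟩ := exists_split_index ht N₀
  refine ⟨m, ?_⟩
  have hG_sum : varSum r F t m ≤ varR r G ^ r := by
    rw [varSum_congr fun j hj => by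
      rw [hG _ (hleft j hj), hG _ ((ht j (hj.trans_le hmn)).le.trans (hleft j hj))]]
    exact varSum_le_varR_rpow hr fun i hi => ht i (hi.trans_le hmn)
  have hH_sum : varSum r F (fun j => t (m + 1 + j)) (n - (m + 1)) ≤ varR r H ^ r := by
    refine (varSum_congr (G := H) fun j hj => ?_).trans_le
      (varSum_le_varR_rpow hr fun i hi => ht _ (by omega))
    exact hH _ _ (hright _ (by omega) (by omega)).le (ht _ (by omega)).le
  -- If no increment straddles `N₀` (e.g. `m = n`), the middle term is harmless padding.
  calc varSum r F t n ≤ varSum r F t (m + 1 + (n - (m + 1))) := varSum_mono_length (by omega)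
    _ = varSum r F t m + ENNReal.ofReal (‖F (t (m + 1)) - F (t m)‖ ^ r)
        + varSum r F (fun j => t (m + 1 + j)) (n - (m + 1)) := varSum_add m _
    _ ≤ varR r G ^ r + varR r H ^ r + ENNReal.ofReal (‖F (t (m + 1)) - F (t m)‖ ^ r) := by
        rw [add_right_comm]
        gcongr

theorem varR_le_of_split (hr : 1 ≤ r) (hG : ∀ N ≤ N₀, F N = G N)
    (hH : ∀ a b, N₀ ≤ a → a ≤ b → F b - F a = H b - H a) :
    varR r F ≤ (varR r G ^ r + varR r H ^ r) ^ (1 / r) + 2 * ⨆ N, ENNReal.ofReal ‖F N‖ := by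
  have hr0 : 0 < r := one_pos.trans_le hr
  refine varR_le_of_forall fun n t ht => ?_
  obtain ⟨m, hm⟩ := varSum_le_of_split hr0 hG hH ht
  have hjump : ENNReal.ofReal (‖F (t (m + 1)) - F (t m)‖ ^ r) ^ (1 / r)
      = ENNReal.ofReal ‖F (t (m + 1)) - F (t m)‖ := by
    rw [← ENNReal.ofReal_rpow_of_nonneg (norm_nonneg _) hr0.le, ← ENNReal.rpow_mul,
      mul_one_div_cancel hr0.ne', ENNReal.rpow_one]
  calc varSum r F t n ^ (1 / r)
      ≤ (varR r G ^ r + varR r H ^ r + ENNReal.ofReal (‖F (t (m + 1)) - F (t m)‖ ^ r)) ^ (1 / r) :=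
        ENNReal.rpow_le_rpow hm (by positivity)
    _ ≤ (varR r G ^ r + varR r H ^ r) ^ (1 / r) + ENNReal.ofReal ‖F (t (m + 1)) - F (t m)‖ := by
        rw [← hjump]
        exact ENNReal.rpow_add_le_add_rpow _ _ (by positivity) ((div_le_one hr0).mpr hr)
    _ ≤ _ := by gcongr; exact ofReal_norm_sub_le_two_mul_iSup F _ _

end Variation

section PartialIntegrals

variable {K : ℝ → ℝ → ℂ} {f : ℝ → ℂ} {x N₀ : ℝ}

lemma Tle_sub_eq_setIntegral_Ico (hint : Integrable (fun y => K x y * f y)) {a b : ℝ}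
    (hab : a ≤ b) : Tle K f x b - Tle K f x a = ∫ y in Set.Ico a b, K x y * f y := by
  rw [Tle, Tle, ← Set.Iio_union_Ico_eq_Iio hab,
    setIntegral_union ((Set.Iio_disjoint_Ici le_rfl).mono_right Set.Ico_subset_Ici_self)
      measurableSet_Ico hint.integrableOn hint.integrableOn, add_sub_cancel_left]

lemma Tle_restrict_Iic_of_le {N : ℝ} (hN : N ≤ N₀) :
    Tle K f x N = Tle K (fun y => if y ≤ N₀ then f y else 0) x N :=
  setIntegral_congr_fun measurableSet_Iio fun y hy => by
    simp [(Set.mem_Iio.mp hy).le.trans hN]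

lemma Tle_sub_restrict_Ici_of_le (hint : Integrable (fun y => K x y * f y)) {a b : ℝ}
    (hN : N₀ ≤ a) (hab : a ≤ b) :
    Tle K f x b - Tle K f x a
      = Tle K (fun y => if N₀ ≤ y then f y else 0) x b
        - Tle K (fun y => if N₀ ≤ y then f y else 0) x a := by
  have hint' : Integrable (fun y => K x y * if N₀ ≤ y then f y else 0) := by
    refine (hint.indicator (measurableSet_Ici (a := N₀))).congr (.of_forall fun y => ?_)
    by_cases hy : N₀ ≤ y <;> simp [hy]
  rw [Tle_sub_eq_setIntegral_Ico hint hab, Tle_sub_eq_setIntegral_Ico hint' hab]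
  exact setIntegral_congr_fun measurableSet_Ico fun y hy => by simp [hN.trans hy.1]

end PartialIntegrals

theorem christ_kiselev_split_general (K : ℝ → ℝ → ℂ) (f : ℝ → ℂ) (r N₀ x : ℝ)
    (hr : 2 ≤ r)
    (hint : Integrable (fun y => K x y * f y)) :
    varR r (Tle K f x) ≤
      (varR r (Tle K (fun y => if y ≤ N₀ then f y else 0) x) ^ r +
        varR r (Tle K (fun y => if N₀ ≤ y then f y else 0) x) ^ r) ^ (1 / r) +
      4 * ⨆ N : ℝ, ENNReal.ofReal (‖Tle K f x N‖) :=
  calc varR r (Tle K f x)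
      ≤ (varR r (Tle K (fun y => if y ≤ N₀ then f y else 0) x) ^ r +
          varR r (Tle K (fun y => if N₀ ≤ y then f y else 0) x) ^ r) ^ (1 / r) +
        2 * ⨆ N : ℝ, ENNReal.ofReal (‖Tle K f x N‖) :=
      varR_le_of_split (one_le_two.trans hr) (fun _ hN => Tle_restrict_Iic_of_le hN)
        (fun _ _ hN hab => Tle_sub_restrict_Ici_of_le hint hN hab)
    _ ≤ _ := by gcongr; norm_num

/-- Variational Christ–Kiselev lemma, splitting step: if `N₀` halves the `L^p` mass of `f`
(with `‖f‖_p = 1`), `f₋ = f·1_{(-∞,N₀]}`, `f₊ = f·1_{[N₀,∞)}`, then pointwise in `x`,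
`‖T_≤ f(x,·)‖_{V^r} ≤ (‖T_≤ f₋(x,·)‖_{V^r}^r + ‖T_≤ f₊(x,·)‖_{V^r}^r)^{1/r} + 4 T_* f(x)`. -/
theorem christ_kiselev_split (K : ℝ → ℝ → ℂ) (f : ℝ → ℂ) (p r N₀ x : ℝ)
    (hp : 1 ≤ p) (hr : 2 ≤ r)
    (hnorm : (∫ y, ‖f y‖ ^ p) = 1)
    (hhalf₁ : (∫ y in Set.Iio N₀, ‖f y‖ ^ p) = 1 / 2)
    (hhalf₂ : (∫ y in Set.Ioi N₀, ‖f y‖ ^ p) = 1 / 2)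
    (hint : Integrable (fun y => K x y * f y)) :
    varR r (Tle K f x) ≤
      (varR r (Tle K (fun y => if y ≤ N₀ then f y else 0) x) ^ r +
        varR r (Tle K (fun y => if N₀ ≤ y then f y else 0) x) ^ r) ^ (1 / r) +
      4 * ⨆ N : ℝ, ENNReal.ofReal (‖Tle K f x N‖) :=
  christ_kiselev_split_general K f r N₀ x hr hint
end

section
/- Lower bound for the r-variation of Fourier partial sums of the de la Vallée-Poussin kernel: there exist constants c > 0 and N₀ such that for all integers N ≥ N₀ and all x with 8/N ≤ x ≤ 1/8, there exist integers 0 ≤ n_0 < n_1 < ... < n_{2K-1} ≤ N with K ≥ ⌊Nx⌋ - 1 such that (∑_{j=0}^{K-1} |D_{n_{2j+1}}(x) - D_{n_{2j}}(x)|^r)^{1/r} ≥ c N^{1/r} x^{1/r - 1}, where D_n(x) = sin((2n+1)πx)/sin(πx) is the Dirichlet kernel and r ≥ 1. -/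
/-!
Pick `n_k` with `(2 n_k + 1) x ∈ [k + 1/4, k + 1/2)`; it exists because consecutive odd multiples
of `x` are `2x ≤ 1/4` apart. Then `sin((2 n_k + 1) π x)` has sign `(-1)^k` and modulus at least
`√2/2`, so each difference `D_{n_{2j+1}}(x) - D_{n_{2j}}(x)` has modulus at least
`√2 / sin(π x) ≥ √2 / (π x)`. With `K = ⌊N x⌋ - 1` the indices `k < 2K` satisfy
`(2 n_k + 1) x < 2K ≤ 2N x`, so `n_k < N`, and summing `K ≥ N x / 2` differences gives
`K^{1/r} √2 / (π x) ≥ (√2 / 2π) N^{1/r} x^{1/r - 1}`.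
-/

open MeasureTheory

/-- The Dirichlet kernel `D_n(x) = sin((2n+1)πx)/sin(πx)`. -/
noncomputable def dirichletKer (n : ℕ) (x : ℝ) : ℝ :=
  Real.sin ((2 * n + 1) * Real.pi * x) / Real.sin (Real.pi * x)

open Real Set Finset

lemma sqrt_two_div_two_le_sin_pi_mul {u : ℝ} (hu : u ∈ Icc (1 / 4 : ℝ) (3 / 4)) :
    √2 / 2 ≤ sin (π * u) := by
  have key : ∀ v ∈ Icc (1 / 4 : ℝ) (1 / 2), √2 / 2 ≤ sin (π * v) := fun v ⟨hv₁, hv₂⟩ ↦ by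
    have hπ := pi_pos
    rw [← sin_pi_div_four]
    exact strictMonoOn_sin.monotoneOn ⟨by linarith, by linarith⟩ ⟨by nlinarith, by nlinarith⟩
      (by nlinarith)
  rcases le_total u (1 / 2) with hu' | hu'
  · exact key u ⟨hu.1, hu'⟩
  · rw [← sin_pi_sub, show π - π * u = π * (1 - u) by ring]
    exact key (1 - u) ⟨by linarith [hu.2], by linarith⟩

lemma sqrt_two_div_two_le_neg_one_pow_mul_sin_pi_mul (k : ℕ) {t : ℝ}
    (ht : t ∈ Icc ((k : ℝ) + 1 / 4) (k + 3 / 4)) : √2 / 2 ≤ (-1) ^ k * sin (π * t) := by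
  have hshift : sin (π * t) = (-1) ^ k * sin (π * (t - k)) := by
    rw [← sin_add_nat_mul_pi]; ring_nf
  rw [hshift, ← mul_assoc, ← pow_add, ← two_mul, pow_mul, neg_one_sq, one_pow, one_mul]
  exact sqrt_two_div_two_le_sin_pi_mul ⟨by linarith [ht.1], by linarith [ht.2]⟩

/-- The least `n` with `a ≤ (2n+1) x`. -/
noncomputable def oddMultipleIndex (x a : ℝ) : ℕ := ⌈(a / x - 1) / 2⌉₊

lemma oddMultipleIndex_mem_Ico {x a : ℝ} (hx : 0 < x) (hxa : x ≤ a) :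
    (2 * oddMultipleIndex x a + 1) * x ∈ Ico a (a + 2 * x) := by
  set y := (a / x - 1) / 2
  have hy : 0 ≤ y := by
    have : 1 ≤ a / x := (one_le_div hx).2 hxa
    positivity
  have hy_le : y ≤ oddMultipleIndex x a := Nat.le_ceil y
  have hy_lt : (oddMultipleIndex x a : ℝ) < y + 1 := Nat.ceil_lt_add_one hy
  have hax : a = (2 * y + 1) * x := by simp only [y]; field_simp; ring
  constructor <;> nlinarith

section Nodes

variable {x : ℝ} (hx : 0 < x) (hx8 : x ≤ 1 / 8)
include hx hx8

lemma oddMultipleIndex_mem_Ico_quarter (k : ℕ) :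
    (2 * oddMultipleIndex x (k + 1 / 4) + 1) * x ∈ Ico ((k : ℝ) + 1 / 4) (k + 1 / 2) := by
  have hk : (0 : ℝ) ≤ k := k.cast_nonneg
  have h := oddMultipleIndex_mem_Ico hx (a := k + 1 / 4) (by linarith)
  exact ⟨h.1, by linarith [h.2]⟩

lemma strictMono_oddMultipleIndex_quarter :
    StrictMono fun k : ℕ ↦ oddMultipleIndex x (k + 1 / 4) := by
  refine strictMono_nat_of_lt_succ fun k ↦ ?_
  have h₁ := (oddMultipleIndex_mem_Ico_quarter hx hx8 k).2
  have h₂ := (oddMultipleIndex_mem_Ico_quarter hx hx8 (k + 1)).1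
  rw [← Nat.cast_lt (α := ℝ)]
  push_cast at h₂ ⊢
  nlinarith

lemma oddMultipleIndex_quarter_lt {k N : ℕ} (h : (k : ℝ) + 1 / 2 ≤ (2 * N + 1) * x) :
    oddMultipleIndex x (k + 1 / 4) < N := by
  have h₁ := (oddMultipleIndex_mem_Ico_quarter hx hx8 k).2
  rw [← Nat.cast_lt (α := ℝ)]
  nlinarith

lemma sqrt_two_div_two_le_neg_one_pow_mul_sin_oddMultipleIndex (k : ℕ) :
    √2 / 2 ≤ (-1) ^ k * sin ((2 * oddMultipleIndex x (k + 1 / 4) + 1) * π * x) := by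
  have h := oddMultipleIndex_mem_Ico_quarter hx hx8 k
  rw [mul_right_comm, mul_comm _ π]
  exact sqrt_two_div_two_le_neg_one_pow_mul_sin_pi_mul k ⟨h.1, by linarith [h.2]⟩

end Nodes

lemma sqrt_two_div_le_abs_dirichletKer_sub {a b : ℕ} {x : ℝ} (hx₀ : 0 < x) (hx₁ : x < 1)
    (ha : √2 / 2 ≤ sin ((2 * a + 1) * π * x)) (hb : sin ((2 * b + 1) * π * x) ≤ -(√2 / 2)) :
    √2 / (π * x) ≤ |dirichletKer b x - dirichletKer a x| := by
  have hs : 0 < sin (π * x) := sin_pos_of_pos_of_lt_pi (by positivity) (by nlinarith [pi_pos])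
  calc √2 / (π * x) ≤ √2 / sin (π * x) := by gcongr; exact sin_le (by positivity)
    _ ≤ (sin ((2 * a + 1) * π * x) - sin ((2 * b + 1) * π * x)) / sin (π * x) := by
      gcongr; linarith
    _ = |dirichletKer b x - dirichletKer a x| := by
      rw [abs_sub_comm, dirichletKer, dirichletKer, div_sub_div_same,
        abs_of_nonneg (div_nonneg (by linarith [sqrt_nonneg 2]) hs.le)]

lemma natCast_rpow_mul_le_sum_rpow_rpow {K : ℕ} {c r : ℝ} {f : ℕ → ℝ} (hc : 0 ≤ c) (hr : 0 < r)
    (hf : ∀ j ∈ range K, c ≤ f j) :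
    (K : ℝ) ^ (1 / r) * c ≤ (∑ j ∈ range K, f j ^ r) ^ (1 / r) := by
  calc (K : ℝ) ^ (1 / r) * c = (∑ _j ∈ range K, c ^ r) ^ (1 / r) := by
        rw [sum_const, card_range, nsmul_eq_mul, mul_rpow (by positivity) (by positivity),
          ← rpow_mul hc, mul_one_div_cancel hr.ne', rpow_one]
    _ ≤ (∑ j ∈ range K, f j ^ r) ^ (1 / r) := by
      gcongr with j hj
      exact hf j hj

lemma mul_rpow_le_mul_rpow_of_le_one {a y s : ℝ} (ha₀ : 0 ≤ a) (ha₁ : a ≤ 1) (hy : 0 ≤ y)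
    (hs : s ≤ 1) : a * y ^ s ≤ (a * y) ^ s := by
  rw [mul_rpow ha₀ hy]
  gcongr
  exact self_le_rpow_of_le_one ha₀ ha₁ hs

lemma half_le_natFloor_sub_one {y : ℝ} (hy : 4 ≤ y) : y / 2 ≤ ((⌊y⌋₊ - 1 : ℕ) : ℝ) := by
  have h₁ : 1 ≤ ⌊y⌋₊ := Nat.le_floor (by norm_num; linarith)
  rw [Nat.cast_sub h₁, Nat.cast_one]
  linarith [Nat.lt_floor_add_one y]

lemma natFloor_sub_one_le_sub_one {y : ℝ} (hy : 1 ≤ y) : ((⌊y⌋₊ - 1 : ℕ) : ℝ) ≤ y - 1 := by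
  have h₁ : 1 ≤ ⌊y⌋₊ := Nat.le_floor (by norm_num; linarith)
  rw [Nat.cast_sub h₁, Nat.cast_one]
  linarith [Nat.floor_le (by linarith : 0 ≤ y)]

lemma sqrt_two_div_two_pi_mul_rpow_le {N K : ℕ} {x r : ℝ} (hx : 0 < x) (hr : 1 ≤ r)
    (hK : N * x / 2 ≤ K) :
    √2 / (2 * π) * (N : ℝ) ^ (1 / r) * x ^ (1 / r - 1) ≤ (K : ℝ) ^ (1 / r) * (√2 / (π * x)) := by
  have hr₀ : 0 < r := by linarith
  calc √2 / (2 * π) * (N : ℝ) ^ (1 / r) * x ^ (1 / r - 1)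
        = 1 / 2 * ((N : ℝ) * x) ^ (1 / r) * (√2 / (π * x)) := by
        rw [mul_rpow (by positivity) hx.le, rpow_sub hx, rpow_one]
        field_simp
    _ ≤ (1 / 2 * ((N : ℝ) * x)) ^ (1 / r) * (√2 / (π * x)) := by
        gcongr
        exact mul_rpow_le_mul_rpow_of_le_one (by norm_num) (by norm_num) (by positivity)
          ((div_le_one hr₀).2 hr)
    _ ≤ (K : ℝ) ^ (1 / r) * (√2 / (π * x)) := by gcongr; linarith

/-- Lower bound for the r-variation of Fourier partial sums of the de la Vallée-Poussin kernel:
for `N` large and `8/N ≤ x ≤ 1/8` there are increasing integers `n_0 < ... < n_{2K-1} ≤ N`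
with `K ≥ ⌊Nx⌋ - 1` such that
`(∑_{j<K} |D_{n_{2j+1}}(x) - D_{n_{2j}}(x)|^r)^{1/r} ≥ c N^{1/r} x^{1/r-1}`. -/
theorem dirichlet_variation_lower_bound :
    ∃ c : ℝ, 0 < c ∧ ∃ N₀ : ℕ, ∀ N : ℕ, N₀ ≤ N → ∀ x : ℝ,
      8 / (N : ℝ) ≤ x → x ≤ 1 / 8 → ∀ r : ℝ, 1 ≤ r →
      ∃ (K : ℕ) (n : ℕ → ℕ),
        (⌊(N : ℝ) * x⌋ - 1 ≤ (K : ℤ)) ∧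
        (∀ j : ℕ, j + 1 < 2 * K → n j < n (j + 1)) ∧
        (∀ j : ℕ, j < 2 * K → n j ≤ N) ∧
        c * (N : ℝ) ^ (1 / r) * x ^ (1 / r - 1) ≤
          (∑ j ∈ Finset.range K,
            |dirichletKer (n (2 * j + 1)) x - dirichletKer (n (2 * j)) x| ^ r) ^ (1 / r) := by
  refine ⟨√2 / (2 * π), by positivity, 1, fun N hN x hx₁ hx₈ r hr ↦ ?_⟩
  have hN : (0 : ℝ) < N := by exact_mod_cast hN
  have hx : 0 < x := (by positivity : (0 : ℝ) < 8 / N).trans_le hx₁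
  have hNx : 8 ≤ (N : ℝ) * x := by rwa [div_le_iff₀ hN, mul_comm] at hx₁
  have hK := natFloor_sub_one_le_sub_one (by linarith : 1 ≤ (N : ℝ) * x)
  have hfloor := Int.natCast_floor_eq_floor (by linarith : 0 ≤ (N : ℝ) * x)
  refine ⟨⌊(N : ℝ) * x⌋₊ - 1, fun k ↦ oddMultipleIndex x (k + 1 / 4), by omega,
    fun j _ ↦ strictMono_oddMultipleIndex_quarter hx hx₈ j.lt_succ_self,
    fun j hj ↦ (oddMultipleIndex_quarter_lt hx hx₈ ?_).le, ?_⟩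
  · have hj : (j : ℝ) + 1 ≤ 2 * ((⌊(N : ℝ) * x⌋₊ - 1 : ℕ) : ℝ) := by exact_mod_cast hj
    linarith
  refine (sqrt_two_div_two_pi_mul_rpow_le hx hr (half_le_natFloor_sub_one (by linarith))).trans
    (natCast_rpow_mul_le_sum_rpow_rpow (by positivity) (by linarith) fun j _ ↦ ?_)
  have h_even := sqrt_two_div_two_le_neg_one_pow_mul_sin_oddMultipleIndex hx hx₈ (2 * j)
  have h_odd := sqrt_two_div_two_le_neg_one_pow_mul_sin_oddMultipleIndex hx hx₈ (2 * j + 1)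
  rw [(even_two_mul j).neg_one_pow, one_mul] at h_even
  rw [(odd_two_mul_add_one j).neg_one_pow, neg_one_mul] at h_odd
  exact sqrt_two_div_le_abs_dirichletKer_sub hx (by linarith) h_even (by linarith)
end

section
/- For every n and 8/N ≤ x ≤ 1/8 with N ≥ 1000 and every 0 ≤ k < 2⌊Nx⌋ there exists an integer n_k with 0 ≤ n_k ≤ N and (2n_k + 1)x ∈ (1/4 + k, 3/4 + k); moreover n_k < n_{k+1} whenever both are defined. -/
theorem exists_nat_add_mul_mem_Ioc {α : Type*} [Field α] [LinearOrder α] [IsStrictOrderedRing α]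
    [FloorSemiring α] {c d t : α} (hd : 0 < d) (hct : c ≤ t) :
    ∃ n : ℕ, c + n * d ∈ Set.Ioc t (t + d) := by
  have hq : 0 ≤ (t - c) / d := div_nonneg (sub_nonneg.2 hct) hd.le
  refine ⟨⌊(t - c) / d⌋₊ + 1, ?_, ?_⟩
  · have := (div_lt_iff₀ hd).1 (Nat.lt_floor_add_one ((t - c) / d))
    push_cast
    linarith
  · have := (le_div_iff₀ hd).1 (Nat.floor_le hq)
    push_cast
    linarith

theorem exists_progression_points_general (N : ℕ) (x : ℝ) (hx2 : x ≤ 1 / 8)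
    (K : ℤ) (hK : (K : ℝ) < (N : ℝ) * x) :
    ∃ n : ℕ → ℕ,
      (∀ k : ℕ, (k : ℤ) < 2 * K →
        n k ≤ N ∧ 1 / 4 + (k : ℝ) < (2 * (n k : ℝ) + 1) * x ∧
          (2 * (n k : ℝ) + 1) * x < 3 / 4 + (k : ℝ)) ∧
      (∀ k : ℕ, (k : ℤ) + 1 < 2 * K → n k < n (k + 1)) := by
  rcases le_or_gt K 0 with hK0 | hK0
  · exact ⟨fun _ => 0, fun k hk => by omega, fun k hk => by omega⟩
  have hx : 0 < x := by
    have : (0 : ℝ) < K := Int.cast_pos.2 hK0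
    exact pos_of_mul_pos_right (by linarith) N.cast_nonneg
  -- `n k` is the first point of the progression `x + n (2x)` beyond `1/4 + k`; since the step
  -- `2x` is at most `1/4`, it stays below `3/4 + k`.
  choose n hn using fun k : ℕ => exists_nat_add_mul_mem_Ioc (by positivity : (0 : ℝ) < 2 * x)
    (by linarith [k.cast_nonneg (α := ℝ)] : x ≤ 1 / 4 + k)
  have hodd : ∀ k, (2 * (n k : ℝ) + 1) * x = x + n k * (2 * x) := fun k => by ring
  refine ⟨n, fun k hk => ⟨?_, ?_, ?_⟩, fun k hk => ?_⟩
  · have hkK : (k : ℝ) + 1 ≤ 2 * K := by exact_mod_cast (show (k : ℤ) + 1 ≤ 2 * K by omega)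
    have : (n k : ℝ) * x < N * x := by linarith [(hn k).2]
    exact_mod_cast (lt_of_mul_lt_mul_right this hx.le).le
  · linarith [hodd k, (hn k).1]
  · linarith [hodd k, (hn k).2]
  · have hnext := (hn (k + 1)).1
    push_cast at hnext
    have : (n k : ℝ) * (2 * x) < n (k + 1) * (2 * x) := by linarith [(hn k).2]
    exact_mod_cast lt_of_mul_lt_mul_right this (by positivity)

/-- For `N ≥ 1000`, `8/N ≤ x ≤ 1/8`, and `K` the largest integer strictly less than `Nx`,
for each `0 ≤ k < 2K` there is an integer `0 ≤ n_k ≤ N` with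
`(2 n_k + 1) x ∈ (1/4 + k, 3/4 + k)`, and moreover `n_k < n_{k+1}` whenever both are defined. -/
theorem exists_progression_points (N : ℕ) (hN : 1000 ≤ N) (x : ℝ)
    (hx1 : 8 / (N : ℝ) ≤ x) (hx2 : x ≤ 1 / 8)
    (K : ℤ) (hK : (K : ℝ) < (N : ℝ) * x)
    (hKmax : ∀ m : ℤ, (m : ℝ) < (N : ℝ) * x → m ≤ K) :
    ∃ n : ℕ → ℕ,
      (∀ k : ℕ, (k : ℤ) < 2 * K →
        n k ≤ N ∧ 1 / 4 + (k : ℝ) < (2 * (n k : ℝ) + 1) * x ∧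
          (2 * (n k : ℝ) + 1) * x < 3 / 4 + (k : ℝ)) ∧
      (∀ k : ℕ, (k : ℤ) + 1 < 2 * K → n k < n (k + 1)) :=
  exists_progression_points_general N x hx2 K hK
end
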